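/- arXiv:2304.00937 — 2 statements merged into one kernel-verified Lean document; each statement's English description precedes it below -/
import Mathlib

section
/- For nonnegative integers n ≥ r, the graph G = K_{n+r+1} + ((2r+1)K_1 ∪ K_2) is (n+r+1)-connected, satisfies I(G) = (n+r+2)/(2r+2) > (n+r+3)/(2(r+2)), and is not (P_{≥2},n)-factor critical avoidable. -/
open SimpleGraph

/-- Number of isolated vertices of a graph. -/
noncomputable def isolCount {V : Type*} (G : SimpleGraph V) : ℕ :=
  Nat.card {v : V // ∀ w, ¬ G.Adj v w}

/-- Number of connected components of a graph. -/
noncomputable def compCount {V : Type*} (G : SimpleGraph V) : ℕ :=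
  Nat.card G.ConnectedComponent

/-- Number of vertices of degree exactly one. -/
noncomputable def deg1Count {V : Type*} (G : SimpleGraph V) : ℕ :=
  Nat.card {v : V // Nat.card {w : V // G.Adj v w} = 1}

/-- A graph is factor-critical if deleting any vertex leaves a graph with a perfect matching. -/
def IsFactorCritical {V : Type*} (G : SimpleGraph V) : Prop :=
  ∀ v : V, ∃ M : (G.induce ({v}ᶜ : Set V)).Subgraph, M.IsPerfectMatching

/-- `G` is the corona of the factor-critical graph induced on `S` (with `3 ≤ |S|`):
every vertex outside `S` is a pendant vertex attached to its own vertex of `S`. -/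
def IsCoronaOfFactorCritical {V : Type*} (G : SimpleGraph V) (S : Set V) : Prop :=
  3 ≤ Nat.card S ∧ IsFactorCritical (G.induce S) ∧
  ∃ z : S ≃ ↥(Sᶜ), ∀ (y : S) (w : V), G.Adj ((z y : ↥(Sᶜ)) : V) w ↔ w = (y : V)

/-- A sun is `K₁`, `K₂`, or the corona of a factor-critical graph with at least 3 vertices. -/
def IsSunGraph {V : Type*} (G : SimpleGraph V) : Prop :=
  Nat.card V = 1 ∨ (Nat.card V = 2 ∧ G.Connected) ∨ ∃ S : Set V, IsCoronaOfFactorCritical G S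

/-- The number of sun components of a graph. -/
noncomputable def sunCount {V : Type*} (G : SimpleGraph V) : ℕ :=
  Nat.card {C : G.ConnectedComponent // IsSunGraph (G.induce C.supp)}

/-- `G` has a `P_{≥k}`-factor: a spanning subgraph all of whose components are paths
of order at least `k`. -/
def HasPathFactor {V : Type*} (G : SimpleGraph V) (k : ℕ) : Prop :=
  ∃ F : SimpleGraph V, F ≤ G ∧ ∀ C : F.ConnectedComponent,
    ∃ m : ℕ, k ≤ m ∧ Nonempty ((F.induce C.supp) ≃g pathGraph m)

/-- Vertex `k`-connectivity: more than `k` vertices, and removing fewer than `k`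
vertices leaves a connected graph. -/
def IsKConnected {V : Type*} (G : SimpleGraph V) (k : ℕ) : Prop :=
  k < Nat.card V ∧ ∀ S : Set V, Nat.card S < k → (G.induce (Sᶜ : Set V)).Connected

/-- The toughness of a graph, valued in `ℝ≥0∞` (infimum over the empty set is `∞`,
which covers complete graphs). -/
noncomputable def toughness {V : Type*} (G : SimpleGraph V) : ENNReal :=
  ⨅ X : {X : Set V // 2 ≤ compCount (G.induce (Xᶜ : Set V))},
    (Nat.card X.1 : ENNReal) / (compCount (G.induce ((X.1)ᶜ : Set V)) : ENNReal)

/-- The isolated toughness of a graph, valued in `ℝ≥0∞`. -/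
noncomputable def isolatedToughness {V : Type*} (G : SimpleGraph V) : ENNReal :=
  ⨅ X : {X : Set V // 2 ≤ isolCount (G.induce (Xᶜ : Set V))},
    (Nat.card X.1 : ENNReal) / (isolCount (G.induce ((X.1)ᶜ : Set V)) : ENNReal)

/-- `G` is `(P_{≥k}, n)`-factor critical avoidable: for every vertex set `W` of size `n`
and every edge `e` of `G − W`, the graph `G − W − e` has a `P_{≥k}`-factor. -/
def PathFactorCriticalAvoidable {V : Type*} (G : SimpleGraph V) (k n : ℕ) : Prop :=
  ∀ W : Set V, Nat.card W = n → ∀ e ∈ (G.induce (Wᶜ : Set V)).edgeSet,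
    HasPathFactor ((G.induce (Wᶜ : Set V)).deleteEdges {e}) k

/-- The join of two graphs: all edges between the two sides. -/
def graphJoin {α β : Type*} (G : SimpleGraph α) (H : SimpleGraph β) :
    SimpleGraph (α ⊕ β) where
  Adj x y :=
    match x, y with
    | Sum.inl a, Sum.inl b => G.Adj a b
    | Sum.inr a, Sum.inr b => H.Adj a b
    | _, _ => True
  symm := ⟨by rintro (a|a) (b|b) h <;> simp_all <;> exact h.symm⟩
  loopless := ⟨by rintro (a|a) h <;> simp_all⟩

/-- The disjoint union of two graphs. -/
def disjUnion {α β : Type*} (G : SimpleGraph α) (H : SimpleGraph β) :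
    SimpleGraph (α ⊕ β) where
  Adj x y :=
    match x, y with
    | Sum.inl a, Sum.inl b => G.Adj a b
    | Sum.inr a, Sum.inr b => H.Adj a b
    | _, _ => False
  symm := ⟨by rintro (a|a) (b|b) h <;> simp_all <;> exact h.symm⟩
  loopless := ⟨by rintro (a|a) h <;> simp_all⟩

/-- `b` disjoint copies of `K₂`. -/
def copiesK2 (b : ℕ) : SimpleGraph (Fin b × Fin 2) where
  Adj x y := x.1 = y.1 ∧ x.2 ≠ y.2
  symm := ⟨by rintro x y ⟨h1, h2⟩; exact ⟨h1.symm, h2.symm⟩⟩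
  loopless := ⟨by rintro x ⟨h1, h2⟩; exact h2 rfl⟩

/-!
Every vertex of the clique `K_{n+r+1}` is adjacent to all other vertices. So deleting fewer than
`n + r + 1` vertices leaves a dominating vertex, and a set `X` whose deletion leaves two isolated
vertices contains the whole clique. Counting which vertices of `(2r+1)K₁ ∪ K₂` can be isolated in
`G - X` gives `|X| / i(G - X) ≥ (n + r + 2) / (2r + 2)` when `r ≤ n`, with equality for the clique
plus one vertex of `K₂`.

Deleting `n` clique vertices and then the edge of `K₂` leaves `2r + 3` independent vertices whose
neighbours all lie among the `r + 1` surviving clique vertices. In a `P_{≥2}`-factor every vertex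
has one or two neighbours, which would give `2r + 3 ≤ 2(r + 1)`.
-/

theorem ENNReal.natCast_div_le_natCast_div_iff {a b c d : ℕ} (hb : b ≠ 0) (hd : d ≠ 0) :
    (a : ENNReal) / b ≤ c / d ↔ a * d ≤ c * b := by
  rw [ENNReal.div_le_iff (by exact_mod_cast hb) (ENNReal.natCast_ne_top _), mul_comm,
    ← mul_div_assoc, ENNReal.le_div_iff_mul_le (.inl (by exact_mod_cast hd))
      (.inl (ENNReal.natCast_ne_top _)), ← Nat.cast_mul, ← Nat.cast_mul, Nat.cast_le, mul_comm c]

theorem ENNReal.add_three_div_lt_add_two_div (n r : ℕ) :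
    ((n : ENNReal) + r + 3) / (2 * ((r : ENNReal) + 2)) <
      ((n : ENNReal) + r + 2) / (2 * (r : ENNReal) + 2) := by
  have key := (ENNReal.natCast_div_le_natCast_div_iff (a := n + r + 2) (b := 2 * r + 2)
    (c := n + r + 3) (d := 2 * r + 4) (by omega) (by omega)).not.2 (by nlinarith)
  push_cast at key
  rw [not_le] at key
  convert key using 2
  ring

namespace SimpleGraph

open Finset

variable {V : Type*}

theorem connected_of_forall_adj {G : SimpleGraph V} (v : V) (h : ∀ w, w ≠ v → G.Adj v w) :
    G.Connected := by
  have hv : ∀ w, G.Reachable v w := fun w ↦ by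
    obtain rfl | hw := eq_or_ne w v
    exacts [.rfl, (h w hw).reachable]
  exact (connected_iff _).2 ⟨fun a b ↦ (hv a).symm.trans (hv b), ⟨v⟩⟩

theorem pathGraph_degree_le_two (m : ℕ) (i : Fin m) [Fintype ((pathGraph m).neighborSet i)] :
    (pathGraph m).degree i ≤ 2 := by
  classical
  rw [← card_neighborFinset_eq_degree]
  calc #((pathGraph m).neighborFinset i) ≤ #({i.val - 1, i.val + 1} : Finset ℕ) := by
        refine card_le_card_of_injOn Fin.val (fun j hj ↦ ?_) Fin.val_injective.injOn
        rw [mem_coe, mem_neighborFinset, pathGraph_adj] at hj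
        simp only [coe_insert, coe_singleton, Set.mem_insert_iff, Set.mem_singleton_iff]
        omega
    _ ≤ 2 := card_le_two

theorem pathGraph_degree_pos {m : ℕ} (hm : 2 ≤ m) (i : Fin m)
    [Fintype ((pathGraph m).neighborSet i)] : 0 < (pathGraph m).degree i := by
  rw [degree_pos_iff_exists_adj]
  by_cases hi : i.val + 1 < m
  · exact ⟨⟨i + 1, hi⟩, pathGraph_adj.2 (.inl rfl)⟩
  · exact ⟨⟨i - 1, by omega⟩, pathGraph_adj.2 (.inr (by simp; omega))⟩

theorem degree_pos_and_le_two_of_forall_iso_pathGraph [Fintype V] {F : SimpleGraph V}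
    [DecidableRel F.Adj]
    (hF : ∀ C : F.ConnectedComponent, ∃ m, 2 ≤ m ∧ Nonempty (F.induce C.supp ≃g pathGraph m))
    (v : V) : 0 < F.degree v ∧ F.degree v ≤ 2 := by
  classical
  obtain ⟨m, hm, ⟨φ⟩⟩ := hF (F.connectedComponentMk v)
  have hv : v ∈ (F.connectedComponentMk v).supp := rfl
  have hdeg : F.degree v = (pathGraph m).degree (φ ⟨v, hv⟩) := by
    rw [φ.degree_eq, degree_induce_of_neighborSet_subset]
    exact fun w hw ↦ (F.connectedComponentMk v).mem_supp_of_adj_mem_supp hv hw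
  rw [hdeg]
  exact ⟨pathGraph_degree_pos hm _, pathGraph_degree_le_two m _⟩

theorem card_le_two_mul_card_of_hasPathFactor [Fintype V] {H : SimpleGraph V}
    (hH : HasPathFactor H 2) {A B : Finset V} (hAB : ∀ a ∈ A, ∀ v, H.Adj a v → v ∈ B) :
    #A ≤ 2 * #B := by
  classical
  obtain ⟨F, hFH, hF⟩ := hH
  have hdeg := degree_pos_and_le_two_of_forall_iso_pathGraph hF
  choose f hf using fun a ↦ (degree_pos_iff_exists_adj F a).1 (hdeg a).1
  refine card_le_mul_card_image_of_maps_to (fun a ha ↦ hAB a ha _ (hFH (hf a))) 2 fun b _ ↦ ?_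
  calc #{a ∈ A | f a = b} ≤ #(F.neighborFinset b) := by
        refine card_le_card fun a ha ↦ ?_
        rw [mem_filter] at ha
        rw [mem_neighborFinset, ← ha.2]
        exact (hf a).symm
    _ ≤ 2 := by rw [card_neighborFinset_eq_degree]; exact (hdeg b).2

theorem isolCount_induce_compl (G : SimpleGraph V) (X : Set V) :
    isolCount (G.induce Xᶜ) = {v | v ∉ X ∧ ∀ w ∉ X, ¬ G.Adj v w}.ncard := by
  rw [isolCount, ← Nat.card_coe_set_eq]
  exact Nat.card_congr
    { toFun := fun v ↦ ⟨v.1.1, v.1.2, fun w hw ↦ v.2 ⟨w, hw⟩⟩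
      invFun := fun v ↦ ⟨⟨v.1, v.2.1⟩, fun w ↦ v.2.2 w w.2⟩ }

theorem isolCount_induce_compl_le_one {G : SimpleGraph V} {X : Set V} {v : V} (hv : v ∉ X)
    (h : ∀ w, w ≠ v → G.Adj v w) : isolCount (G.induce Xᶜ) ≤ 1 := by
  rw [isolCount_induce_compl, ← Set.ncard_singleton v]
  refine Set.ncard_le_ncard fun w hw ↦ ?_
  by_contra hwv
  exact hw.2 v hv (h w hwv).symm

end SimpleGraph

section Join

variable {α β : Type*} {G : SimpleGraph α} {H : SimpleGraph β}

@[simp] theorem graphJoin_adj_inl_inl {a b : α} :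
    (graphJoin G H).Adj (.inl a) (.inl b) ↔ G.Adj a b := .rfl
@[simp] theorem graphJoin_adj_inr_inr {a b : β} :
    (graphJoin G H).Adj (.inr a) (.inr b) ↔ H.Adj a b := .rfl
@[simp] theorem graphJoin_adj_inl_inr (a : α) (b : β) : (graphJoin G H).Adj (.inl a) (.inr b) :=
  trivial
@[simp] theorem graphJoin_adj_inr_inl (a : β) (b : α) : (graphJoin G H).Adj (.inr a) (.inl b) :=
  trivial

@[simp] theorem disjUnion_adj_inl_inl {a b : α} :
    (disjUnion G H).Adj (.inl a) (.inl b) ↔ G.Adj a b := .rfl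
@[simp] theorem disjUnion_adj_inr_inr {a b : β} :
    (disjUnion G H).Adj (.inr a) (.inr b) ↔ H.Adj a b := .rfl
@[simp] theorem not_disjUnion_adj_inl_inr (a : α) (b : β) :
    ¬ (disjUnion G H).Adj (.inl a) (.inr b) :=
  id
@[simp] theorem not_disjUnion_adj_inr_inl (a : β) (b : α) :
    ¬ (disjUnion G H).Adj (.inr a) (.inl b) :=
  id

end Join

section Sharpness

open SimpleGraph

variable (n r : ℕ)

abbrev sharpGraph : SimpleGraph (Fin (n + r + 1) ⊕ (Fin (2 * r + 1) ⊕ Fin 2)) :=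
  graphJoin ⊤ (disjUnion ⊥ ⊤)

variable {n r}

theorem sharpGraph_adj_inl (i : Fin (n + r + 1)) (v) (hv : v ≠ .inl i) :
    (sharpGraph n r).Adj (.inl i) v := by
  rcases v with j | x
  · simpa [eq_comm] using hv
  · simp

theorem sharpGraph_adj_inr_inr {x y : Fin (2 * r + 1) ⊕ Fin 2} :
    (sharpGraph n r).Adj (.inr x) (.inr y) ↔ ∃ k k', x = .inr k ∧ y = .inr k' ∧ k ≠ k' := by
  rcases x with j | k <;> rcases y with j' | k' <;> simp

variable (n r)

theorem isKConnected_sharpGraph : IsKConnected (sharpGraph n r) (n + r + 1) := by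
  refine ⟨by simp only [Nat.card_eq_fintype_card, Fintype.card_sum, Fintype.card_fin]; omega,
    fun S hS ↦ ?_⟩
  obtain ⟨i, hi⟩ : ∃ i, Sum.inl i ∉ S := by
    by_contra! h
    have := Set.ncard_le_ncard (Set.range_subset_iff.2 h)
    rw [Set.ncard_range_of_injective Sum.inl_injective, ← Nat.card_coe_set_eq] at this
    simp only [Nat.card_eq_fintype_card, Fintype.card_fin] at this
    omega
  exact connected_of_forall_adj ⟨_, hi⟩ fun w hw ↦
    sharpGraph_adj_inl i w (Subtype.coe_ne_coe.2 hw)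

variable {n r}

theorem range_inl_subset_of_two_le_isolCount
    {X : Set (Fin (n + r + 1) ⊕ (Fin (2 * r + 1) ⊕ Fin 2))}
    (hX : 2 ≤ isolCount ((sharpGraph n r).induce Xᶜ)) : Set.range Sum.inl ⊆ X := by
  rintro _ ⟨i, rfl⟩
  by_contra hi
  have := isolCount_induce_compl_le_one hi (sharpGraph_adj_inl i)
  omega

theorem mul_isolCount_le (hrn : r ≤ n) {X : Set (Fin (n + r + 1) ⊕ (Fin (2 * r + 1) ⊕ Fin 2))}
    (hX : 2 ≤ isolCount ((sharpGraph n r).induce Xᶜ)) :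
    (n + r + 2) * isolCount ((sharpGraph n r).induce Xᶜ) ≤ (2 * r + 2) * Nat.card X := by
  set I := {v | v ∉ X ∧ ∀ w ∉ X, ¬ (sharpGraph n r).Adj v w}
  set Y := X ∩ Set.range Sum.inr
  have hK := range_inl_subset_of_two_le_isolCount hX
  have hI : I ⊆ Set.range Sum.inr := by
    rintro (i | x) hv
    exacts [absurd (hK ⟨i, rfl⟩) hv.1, ⟨x, rfl⟩]
  have hIY : I.ncard + Y.ncard ≤ 2 * r + 3 := by
    rw [← Set.ncard_union_eq (Set.disjoint_left.2 fun v hvI hvY ↦ hvI.1 hvY.1)]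
    calc (I ∪ Y).ncard ≤ (Set.range Sum.inr).ncard :=
          Set.ncard_le_ncard (Set.union_subset hI Set.inter_subset_right)
      _ = 2 * r + 3 := by
          simp only [Set.ncard_range_of_injective Sum.inr_injective, Nat.card_eq_fintype_card,
            Fintype.card_sum, Fintype.card_fin]
  have hXY : n + r + 1 + Y.ncard ≤ Nat.card X := by
    have hdisj : Disjoint (Set.range Sum.inl) Y :=
      Set.disjoint_left.2 fun _ ⟨_, hi⟩ ⟨_, _, hx⟩ ↦ by simp [← hi] at hx
    calc n + r + 1 + Y.ncard = (Set.range Sum.inl ∪ Y).ncard := by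
          rw [Set.ncard_union_eq hdisj, Set.ncard_range_of_injective Sum.inl_injective,
            Nat.card_eq_fintype_card, Fintype.card_fin]
      _ ≤ X.ncard := Set.ncard_le_ncard (Set.union_subset hK Set.inter_subset_left)
  have hY : Y = ∅ → I.ncard ≤ 2 * r + 1 := by
    intro hY
    have hIsub : I ⊆ Set.range (Sum.inr ∘ Sum.inl) := by
      intro v hv
      obtain ⟨j | k, rfl⟩ := hI hv
      · exact ⟨j, rfl⟩
      -- the vertex of `K₂` paired with `k` lies outside `X`, so `k` is not isolated
      obtain ⟨k', hk'⟩ := exists_ne k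
      have hk'X : Sum.inr (Sum.inr k') ∉ X := fun h ↦ hY.subset ⟨h, _, rfl⟩
      exact absurd (sharpGraph_adj_inr_inr.2 ⟨k, k', rfl, rfl, hk'.symm⟩) (hv.2 _ hk'X)
    calc I.ncard ≤ (Set.range (Sum.inr ∘ Sum.inl)).ncard := Set.ncard_le_ncard hIsub
      _ = 2 * r + 1 := by
          rw [Set.ncard_range_of_injective (Sum.inr_injective.comp Sum.inl_injective),
            Nat.card_eq_fintype_card, Fintype.card_fin]
  rw [isolCount_induce_compl]
  rcases Y.eq_empty_or_nonempty with hY0 | hY0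
  · have := hY hY0
    nlinarith
  · have := (Set.ncard_pos).2 hY0
    nlinarith

variable (n r) in
def sharpCut : Set (Fin (n + r + 1) ⊕ (Fin (2 * r + 1) ⊕ Fin 2)) :=
  insert (.inr (.inr 0)) (Set.range Sum.inl)

theorem ncard_sharpCut : (sharpCut n r).ncard = n + r + 2 := by
  rw [sharpCut, Set.ncard_insert_of_notMem (by simp),
    Set.ncard_range_of_injective Sum.inl_injective, Nat.card_eq_fintype_card, Fintype.card_fin]

theorem isolCount_sharpGraph_induce_compl_sharpCut :
    isolCount ((sharpGraph n r).induce (sharpCut n r)ᶜ) = 2 * r + 2 := by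
  have hout : ∀ v ∉ sharpCut n r, (∃ j, v = .inr (.inl j)) ∨ v = .inr (.inr 1) := by
    rintro (i | j | k) hv
    · exact absurd (.inr ⟨i, rfl⟩) hv
    · exact .inl ⟨j, rfl⟩
    · fin_cases k
      exacts [absurd (.inl rfl) hv, .inr rfl]
  have hisol : {v | v ∉ sharpCut n r ∧ ∀ w ∉ sharpCut n r, ¬ (sharpGraph n r).Adj v w} =
      (sharpCut n r)ᶜ := by
    refine Set.sep_eq_self_iff_mem_true.2 fun v hv w hw hvw ↦ ?_
    rcases hout v hv with ⟨j, rfl⟩ | rfl <;> rcases hout w hw with ⟨j', rfl⟩ | rfl <;>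
      simp at hvw
  rw [isolCount_induce_compl, hisol, Set.ncard_compl, ncard_sharpCut, Nat.card_eq_fintype_card]
  simp only [Fintype.card_sum, Fintype.card_fin]
  omega

theorem isolatedToughness_sharpGraph (hrn : r ≤ n) :
    isolatedToughness (sharpGraph n r) = ((n : ENNReal) + r + 2) / (2 * (r : ENNReal) + 2) := by
  have hcast : ((n : ENNReal) + r + 2) / (2 * (r : ENNReal) + 2) =
      ((n + r + 2 : ℕ) : ENNReal) / ((2 * r + 2 : ℕ) : ENNReal) := by
    push_cast
    rfl
  have hcut := isolCount_sharpGraph_induce_compl_sharpCut (n := n) (r := r)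
  rw [hcast]
  refine le_antisymm (iInf_le_of_le ⟨sharpCut n r, by omega⟩ ?_) (le_iInf ?_)
  · simp only [hcut, Nat.card_coe_set_eq, ncard_sharpCut, le_rfl]
  · rintro ⟨X, hX⟩
    dsimp only
    exact (ENNReal.natCast_div_le_natCast_div_iff (by omega) (by omega)).2
      (by simpa only [mul_comm] using mul_isolCount_le hrn hX)

open Finset in
theorem not_pathFactorCriticalAvoidable_sharpGraph :
    ¬ PathFactorCriticalAvoidable (sharpGraph n r) 2 n := by
  classical
  intro hG
  set W : Set (Fin (n + r + 1) ⊕ (Fin (2 * r + 1) ⊕ Fin 2)) :=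
    Set.range fun i : Fin n ↦ .inl (Fin.castLE (by omega) i)
  have hW : Nat.card W = n := by
    rw [Nat.card_coe_set_eq, Set.ncard_range_of_injective
      fun _ _ h ↦ Fin.castLE_injective _ (Sum.inl_injective h), Nat.card_eq_fintype_card,
      Fintype.card_fin]
  have hinl : ∀ j, Sum.inl j ∉ W → n ≤ j.val := fun j hj ↦ by
    by_contra! h
    exact hj ⟨⟨j, h⟩, rfl⟩
  have hinr : ∀ x, Sum.inr x ∉ W := by rintro x ⟨i, hi⟩; cases hi
  let k₀ : ↥Wᶜ := ⟨.inr (.inr 0), hinr _⟩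
  let k₁ : ↥Wᶜ := ⟨.inr (.inr 1), hinr _⟩
  have he : s(k₀, k₁) ∈ ((sharpGraph n r).induce Wᶜ).edgeSet := by simp [k₀, k₁]
  let H := ((sharpGraph n r).induce Wᶜ).deleteEdges {s(k₀, k₁)}
  let A : Finset ↥Wᶜ := univ.image fun x ↦ ⟨.inr x, hinr x⟩
  let B : Finset ↥Wᶜ := univ.image fun j : Fin (r + 1) ↦ ⟨.inl ⟨n + j, by omega⟩, by
    rintro ⟨i, hi⟩
    have := congrArg Fin.val (Sum.inl_injective hi)
    simp only [Fin.val_castLE] at this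
    omega⟩
  have hAB : ∀ a ∈ A, ∀ v, H.Adj a v → v ∈ B := by
    simp only [A, mem_image, mem_univ, true_and, forall_exists_index, forall_apply_eq_imp_iff]
    rintro x ⟨j | y, hv⟩ hxv
    · refine mem_image.2 ⟨⟨j - n, by omega⟩, mem_univ _, ?_⟩
      have := hinl j hv
      ext
      simp only [Sum.inl.injEq, Fin.ext_iff]
      omega
    · obtain ⟨hxy, hne⟩ := deleteEdges_adj.1 hxv
      obtain ⟨k, k', rfl, rfl, hkk'⟩ := (sharpGraph_adj_inr_inr (n := n)).1 hxy
      refine absurd ?_ hne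
      fin_cases k <;> fin_cases k' <;> simp_all [k₀, k₁]
  have hA : #A = 2 * r + 3 := by
    rw [card_image_of_injective _ fun x y hxy ↦ by simpa using hxy]
    simp
  have hB : #B ≤ r + 1 := card_image_le.trans (by simp)
  have := card_le_two_mul_card_of_hasPathFactor (hG W hW _ he) hAB
  omega

end Sharpness

/-- Remark 2: sharpness of the connectivity condition in Theorem 6. -/
theorem stmt4 (n r : ℕ) (h : r ≤ n)
    (G : SimpleGraph (Fin (n + r + 1) ⊕ (Fin (2 * r + 1) ⊕ Fin 2)))
    (hG : G = graphJoin (⊤ : SimpleGraph (Fin (n + r + 1)))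
      (disjUnion (⊥ : SimpleGraph (Fin (2 * r + 1))) (⊤ : SimpleGraph (Fin 2)))) :
    IsKConnected G (n + r + 1) ∧
    isolatedToughness G = ((n : ENNReal) + r + 2) / (2 * (r : ENNReal) + 2) ∧
    ((n : ENNReal) + r + 2) / (2 * (r : ENNReal) + 2) >
      ((n : ENNReal) + r + 3) / (2 * ((r : ENNReal) + 2)) ∧
    ¬ PathFactorCriticalAvoidable G 2 n := by
  subst hG
  exact ⟨isKConnected_sharpGraph n r, isolatedToughness_sharpGraph h,
    ENNReal.add_three_div_lt_add_two_div n r, not_pathFactorCriticalAvoidable_sharpGraph⟩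
end

section
/- For integers n ≥ 1 and r ≥ 0, the graph G = K_{n+r+1} + ((2r+1)K_1 ∪ K_2) is (n+r+1)-connected, has toughness t(G) = (n+r+1)/(2r+2) > (n+r+2)/(2(r+2)), and is not (P_{≥3},n)-factor critical avoidable. -/
open SimpleGraph

/-! In the join with a clique, every vertex of the clique is adjacent to everything, so a vertex
set disconnects the graph only if it contains the whole clique `K_{n+r+1}`; what is left is then a
subgraph of `(2r+1)K₁ ∪ K₂`, with at most `2r+2` components, and exactly `2r+2` when nothing else
is deleted. This gives the connectivity and the toughness.

For the path factor, delete `n` clique vertices and the edge of `K₂`. The `2r+3` vertices outside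
the clique are now independent, so in a `P_{≥3}`-factor each of them has a neighbour among the
`r+1` remaining clique vertices, each of which has at most two neighbours on its path;
but `2r+3 > 2(r+1)`. -/

namespace SimpleGraph

variable {V : Type*} {G : SimpleGraph V}

lemma connected_induce_of_forall_adj {T : Set V} {v : V} (hv : v ∈ T)
    (h : ∀ u ∈ T, u ≠ v → G.Adj v u) : (G.induce T).Connected := by
  refine (connected_iff_exists_forall_reachable _).2 ⟨⟨v, hv⟩, fun ⟨u, hu⟩ => ?_⟩
  by_cases huv : u = v
  · subst huv; rfl
  · exact Adj.reachable (h u hu huv)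

lemma compCount_eq_one_of_connected (hG : G.Connected) : compCount G = 1 :=
  have := hG.preconnected.subsingleton_connectedComponent
  have : Nonempty G.ConnectedComponent := ⟨G.connectedComponentMk hG.nonempty.some⟩
  Nat.card_unique

lemma eq_of_reachable_of_forall_not_adj {u v : V} (hu : ∀ w, ¬ G.Adj u w)
    (h : G.Reachable u v) : u = v := by
  obtain ⟨p⟩ := h
  cases p with
  | nil => rfl
  | cons ha _ => exact absurd ha (hu _)

lemma card_le_compCount [Finite V] {ι : Type*} (f : ι → V)
    (hf : ∀ i j, G.Reachable (f i) (f j) → i = j) : Nat.card ι ≤ compCount G :=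
  Nat.card_le_card_of_injective (fun i => G.connectedComponentMk (f i))
    fun i j h => hf i j (ConnectedComponent.exact h)

lemma compCount_le_card {β : Type*} [Finite β] (f : V → β)
    (hf : ∀ u v, f u = f v → G.Reachable u v) : compCount G ≤ Nat.card β :=
  Nat.card_le_card_of_injective (fun C : G.ConnectedComponent => f C.out) fun C D h => by
    rw [← C.out_eq, ← D.out_eq]
    exact ConnectedComponent.sound (hf _ _ h)

lemma pathGraph_exists_adj {m : ℕ} (hm : 2 ≤ m) (p : Fin m) : ∃ q, (pathGraph m).Adj p q := by
  by_cases h : p.val + 1 < m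
  · exact ⟨⟨p + 1, h⟩, pathGraph_adj.2 (.inl rfl)⟩
  · exact ⟨⟨p - 1, by omega⟩, pathGraph_adj.2 (.inr (by simp only; omega))⟩

lemma pathGraph_eq_or_eq_or_eq_of_adj {m : ℕ} {p u w x : Fin m} (hu : (pathGraph m).Adj p u)
    (hw : (pathGraph m).Adj p w) (hx : (pathGraph m).Adj p x) : u = w ∨ u = x ∨ w = x := by
  simp only [pathGraph_adj, Fin.ext_iff] at *
  omega

lemma HasPathFactor.exists_le {G : SimpleGraph V} {k : ℕ} (hG : HasPathFactor G k)
    (hk : 2 ≤ k) : ∃ F ≤ G, (∀ v, ∃ w, F.Adj v w) ∧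
      ∀ v u w x, F.Adj v u → F.Adj v w → F.Adj v x → u = w ∨ u = x ∨ w = x := by
  obtain ⟨F, hFG, hF⟩ := hG
  refine ⟨F, hFG, fun v => ?_, fun v u w x hu hw hx => ?_⟩
  · obtain ⟨m, hm, ⟨φ⟩⟩ := hF (F.connectedComponentMk v)
    obtain ⟨q, hq⟩ := pathGraph_exists_adj (hk.trans hm) (φ ⟨v, rfl⟩)
    have := φ.symm.map_rel_iff.2 hq
    rw [RelIso.symm_apply_apply] at this
    exact ⟨_, this⟩
  · obtain ⟨m, -, ⟨φ⟩⟩ := hF (F.connectedComponentMk v)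
    have mem : ∀ {y}, F.Adj v y → y ∈ (F.connectedComponentMk v).supp :=
      fun hy => (ConnectedComponent.connectedComponentMk_eq_of_adj hy).symm
    have embed : ∀ {y} (hy : F.Adj v y), (pathGraph m).Adj (φ ⟨v, rfl⟩) (φ ⟨y, mem hy⟩) :=
      fun hy => φ.map_rel_iff.2 hy
    rcases pathGraph_eq_or_eq_or_eq_of_adj (embed hu) (embed hw) (embed hx) with h | h | h
    all_goals simp only [EmbeddingLike.apply_eq_iff_eq, Subtype.mk.injEq] at h
    exacts [.inl h, .inr (.inl h), .inr (.inr h)]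

lemma card_le_two_mul_card_of_exists_adj {ι κ : Type*} [Finite ι] [Finite κ]
    {F : SimpleGraph V}
    (hF : ∀ v u w x, F.Adj v u → F.Adj v w → F.Adj v x → u = w ∨ u = x ∨ w = x)
    {f : ι → V} (hf : f.Injective) (g : κ → V) (hfg : ∀ i, ∃ j, F.Adj (f i) (g j)) :
    Nat.card ι ≤ 2 * Nat.card κ := by
  classical
  have := Fintype.ofFinite ι
  have := Fintype.ofFinite κ
  have key := Finset.card_mul_le_card_mul (fun i j => F.Adj (f i) (g j))
    (s := Finset.univ) (t := Finset.univ) (m := 1) (n := 2) (fun i _ => ?_) (fun j _ => ?_)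
  · simpa [mul_comm] using key
  · obtain ⟨j, hj⟩ := hfg i
    exact Finset.card_pos.2 ⟨j, by simp [Finset.bipartiteAbove, hj]⟩
  · by_contra! h3
    obtain ⟨a, ha, b, hb, c, hc, hab, hac, hbc⟩ := Finset.two_lt_card.1 h3
    simp only [Finset.bipartiteBelow, Finset.mem_filter, Finset.mem_univ, true_and] at ha hb hc
    rcases hF (g j) (f a) (f b) (f c) ha.symm hb.symm hc.symm with h | h | h
    exacts [hab (hf h), hac (hf h), hbc (hf h)]

end SimpleGraph

section Join

variable {α β : Type*} (H : SimpleGraph β)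

lemma graphJoin_top_adj_inl (a : α) (v : α ⊕ β) :
    (graphJoin ⊤ H).Adj (.inl a) v ↔ v ≠ .inl a := by
  rcases v with b | b <;> simp [graphJoin, eq_comm]

lemma connected_induce_graphJoin_top {T : Set (α ⊕ β)} {a : α} (ha : .inl a ∈ T) :
    ((graphJoin ⊤ H).induce T).Connected :=
  connected_induce_of_forall_adj ha fun u _ hu => (graphJoin_top_adj_inl H a u).2 hu

lemma exists_inl_notMem_of_card_lt [Finite α] [Finite β] {S : Set (α ⊕ β)}
    (hS : Nat.card S < Nat.card α) : ∃ a, .inl a ∉ S := by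
  by_contra! hc
  have : Nat.card α ≤ Nat.card S := Nat.card_le_card_of_injective (fun a => ⟨.inl a, hc a⟩)
    fun a b hab => Sum.inl_injective (congrArg Subtype.val hab)
  omega

theorem isKConnected_graphJoin_top [Finite α] [Finite β] [Nonempty β] :
    IsKConnected (graphJoin (⊤ : SimpleGraph α) H) (Nat.card α) := by
  refine ⟨?_, fun S hS => ?_⟩
  · rw [Nat.card_sum]
    have := Nat.card_pos (α := β)
    omega
  · obtain ⟨a, ha⟩ := exists_inl_notMem_of_card_lt hS
    exact connected_induce_graphJoin_top H ha

lemma range_inl_subset_of_two_le_compCount {X : Set (α ⊕ β)}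
    (hX : 2 ≤ compCount ((graphJoin (⊤ : SimpleGraph α) H).induce Xᶜ)) :
    Set.range Sum.inl ⊆ X := by
  rintro _ ⟨a, rfl⟩
  by_contra ha
  rw [compCount_eq_one_of_connected (connected_induce_graphJoin_top H ha)] at hX
  omega

theorem toughness_graphJoin_top [Finite α] [Finite β] {c : ℕ} (hc : 2 ≤ c)
    (hle : ∀ X : Set (α ⊕ β), Set.range Sum.inl ⊆ X → compCount ((graphJoin ⊤ H).induce Xᶜ) ≤ c)
    (hge : c ≤ compCount ((graphJoin (⊤ : SimpleGraph α) H).induce (Set.range Sum.inl)ᶜ)) :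
    toughness (graphJoin (⊤ : SimpleGraph α) H) = Nat.card α / c := by
  have hcard : Nat.card (Set.range (Sum.inl : α → α ⊕ β)) = Nat.card α :=
    Nat.card_range_of_injective Sum.inl_injective
  refine le_antisymm ?_ (le_iInf fun ⟨X, hX⟩ => ?_)
  · refine (iInf_le _ ⟨Set.range Sum.inl, hc.trans hge⟩).trans ?_
    rw [hcard]
    exact ENNReal.div_le_div_left (by exact_mod_cast hge) _
  · have hsub := range_inl_subset_of_two_le_compCount H hX
    have hX : Nat.card α ≤ Nat.card X := hcard ▸ Nat.card_mono X.toFinite hsub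
    exact ENNReal.div_le_div (by exact_mod_cast hX) (by exact_mod_cast hle X hsub)

end Join

section JoinIsolatedAndClique

variable {α β γ : Type*} (K : SimpleGraph α)

lemma compCount_induce_graphJoin_le [Finite β] {X : Set (α ⊕ (β ⊕ γ))}
    (hX : Set.range Sum.inl ⊆ X) :
    compCount ((graphJoin K (disjUnion (⊥ : SimpleGraph β) (⊤ : SimpleGraph γ))).induce Xᶜ) ≤
      Nat.card β + 1 := by
  have key := compCount_le_card (β := β ⊕ Unit)
    (G := (graphJoin K (disjUnion (⊥ : SimpleGraph β) (⊤ : SimpleGraph γ))).induce Xᶜ)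
    (fun v => v.1.elim (fun _ => .inr ()) (Sum.map id fun _ => ())) ?_
  · simpa using key
  rintro ⟨a | b | c, hu⟩ ⟨a' | b' | c', hv⟩ heq
  all_goals first
    | exact absurd (hX ⟨_, rfl⟩) hu
    | exact absurd (hX ⟨_, rfl⟩) hv
    | skip
  all_goals simp only [Sum.elim_inr, Sum.map_inl, Sum.map_inr, id, Sum.inl.injEq,
    reduceCtorEq] at heq
  · subst heq; rfl
  · by_cases hcc : c = c'
    · subst hcc; rfl
    · exact Adj.reachable hcc

lemma le_compCount_induce_graphJoin_compl [Finite α] [Finite β] [Finite γ] (c : γ) :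
    Nat.card β + 1 ≤ compCount ((graphJoin K (disjUnion (⊥ : SimpleGraph β)
      (⊤ : SimpleGraph γ))).induce (Set.range Sum.inl)ᶜ) := by
  have mem : ∀ y : β ⊕ γ, (.inr y : α ⊕ (β ⊕ γ)) ∈ (Set.range Sum.inl)ᶜ := by simp
  have key := card_le_compCount (ι := β ⊕ Unit)
    (G := (graphJoin K (disjUnion (⊥ : SimpleGraph β) (⊤ : SimpleGraph γ))).induce
      (Set.range Sum.inl)ᶜ)
    (fun i => ⟨.inr (i.elim .inl fun _ => .inr c), mem _⟩) ?_
  · simpa using key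
  have isolated : ∀ (b : β) w, ¬ ((graphJoin K (disjUnion (⊥ : SimpleGraph β)
      (⊤ : SimpleGraph γ))).induce (Set.range Sum.inl)ᶜ).Adj ⟨.inr (.inl b), mem _⟩ w := by
    rintro b ⟨a | b' | c', hw⟩ hadj
    · exact hw ⟨a, rfl⟩
    · exact hadj
    · exact hadj
  rintro (b | ⟨⟩) (b' | ⟨⟩) h
  · simpa using eq_of_reachable_of_forall_not_adj (isolated b) h
  · simpa using eq_of_reachable_of_forall_not_adj (isolated b) h
  · simpa using eq_of_reachable_of_forall_not_adj (isolated b') h.symm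
  · rfl

end JoinIsolatedAndClique

open scoped ENNReal in
lemma ENNReal.natCast_div_lt_natCast_div {a b c d : ℕ} (hb : b ≠ 0) (hd : d ≠ 0)
    (h : a * d < c * b) : (a : ℝ≥0∞) / b < c / d := by
  have hb' : (b : ℝ≥0∞) ≠ 0 := by exact_mod_cast hb
  have hd' : (d : ℝ≥0∞) ≠ 0 := by exact_mod_cast hd
  rw [ENNReal.div_lt_iff (.inl hb') (.inl (ENNReal.natCast_ne_top b)), mul_comm, ← mul_div_assoc,
    ENNReal.lt_div_iff_mul_lt (.inl hd') (.inl (ENNReal.natCast_ne_top d))]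
  norm_cast
  linarith

lemma Fin.sym2_mk_apply_eq_of_ne {X : Type*} (h : Fin 2 → X) {j j' : Fin 2} (hj : j ≠ j') :
    s(h j, h j') = s(h 0, h 1) := by
  fin_cases j <;> fin_cases j' <;> simp_all [Sym2.eq_swap]

theorem not_pathFactorCriticalAvoidable_graphJoin {α β : Type*} [Finite α] [Finite β]
    (K : SimpleGraph α) {k n : ℕ} (hk : 2 ≤ k) (hn : n ≤ Nat.card α)
    (hβ : 2 * (Nat.card α - n) < Nat.card β + 2) :
    ¬ PathFactorCriticalAvoidable
      (graphJoin K (disjUnion (⊥ : SimpleGraph β) (⊤ : SimpleGraph (Fin 2)))) k n := by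
  intro hG
  obtain ⟨S, -, hS⟩ := Set.exists_subset_card_eq (s := (Set.univ : Set α)) (n := n)
    (by rwa [Set.ncard_univ])
  set W : Set (α ⊕ (β ⊕ Fin 2)) := Sum.inl '' S
  have hW : Nat.card W = n := by
    rw [Nat.card_image_of_injective Sum.inl_injective, Nat.card_coe_set_eq, hS]
  have mem_inr : ∀ y, (.inr y : α ⊕ (β ⊕ Fin 2)) ∈ Wᶜ := by simp [W]
  have mem_inl : ∀ a : (Sᶜ : Set α), (.inl a.1 : α ⊕ (β ⊕ Fin 2)) ∈ Wᶜ := fun a ⟨b, hb, hba⟩ =>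
    a.2 (Sum.inl_injective hba ▸ hb)
  let K2 : Fin 2 → ↥Wᶜ := fun j => ⟨.inr (.inr j), mem_inr _⟩
  obtain ⟨F, hFG, hex, hdeg⟩ := (hG W hW s(K2 0, K2 1) zero_ne_one).exists_le hk
  have hR : ∀ y, ∃ a : ↥Sᶜ, F.Adj ⟨.inr y, mem_inr y⟩ ⟨.inl a.1, mem_inl a⟩ := by
    intro y
    obtain ⟨⟨a | y', hw⟩, hadj⟩ := hex ⟨.inr y, mem_inr y⟩
    · exact ⟨⟨a, fun ha => hw ⟨a, ha, rfl⟩⟩, hadj⟩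
    · obtain ⟨hGadj, hne⟩ := deleteEdges_adj.1 (hFG hadj)
      rcases y with b | j <;> rcases y' with b' | j'
      · exact hGadj.elim
      · exact hGadj.elim
      · exact hGadj.elim
      · exact (hne (Fin.sym2_mk_apply_eq_of_ne K2 hGadj)).elim
  have hcard := card_le_two_mul_card_of_exists_adj hdeg
    (f := fun y => (⟨.inr y, mem_inr y⟩ : ↥Wᶜ))
    (fun y y' h => Sum.inr_injective (congrArg Subtype.val h)) _ hR
  rw [Nat.card_sum, Nat.card_eq_fintype_card (α := Fin 2), Fintype.card_fin,
    Nat.card_coe_set_eq, Set.ncard_compl, hS] at hcard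
  omega

/-- Remark 4: sharpness of the connectivity condition in Theorem 7. -/
theorem stmt9 (n r : ℕ) (h : 1 ≤ n)
    (G : SimpleGraph (Fin (n + r + 1) ⊕ (Fin (2 * r + 1) ⊕ Fin 2)))
    (hG : G = graphJoin (⊤ : SimpleGraph (Fin (n + r + 1)))
      (disjUnion (⊥ : SimpleGraph (Fin (2 * r + 1))) (⊤ : SimpleGraph (Fin 2)))) :
    IsKConnected G (n + r + 1) ∧
    toughness G = ((n : ENNReal) + r + 1) / (2 * (r : ENNReal) + 2) ∧
    ((n : ENNReal) + r + 1) / (2 * (r : ENNReal) + 2) >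
      ((n : ENNReal) + r + 2) / (2 * ((r : ENNReal) + 2)) ∧
    ¬ PathFactorCriticalAvoidable G 3 n := by
  subst hG
  set H := disjUnion (⊥ : SimpleGraph (Fin (2 * r + 1))) (⊤ : SimpleGraph (Fin 2))
  have hle : ∀ X : Set (Fin (n + r + 1) ⊕ (Fin (2 * r + 1) ⊕ Fin 2)), Set.range Sum.inl ⊆ X →
      compCount ((graphJoin ⊤ H).induce Xᶜ) ≤ 2 * r + 2 := fun X hX => by
    simpa using compCount_induce_graphJoin_le ⊤ hX
  have hge := le_compCount_induce_graphJoin_compl (⊤ : SimpleGraph (Fin (n + r + 1)))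
    (β := Fin (2 * r + 1)) (0 : Fin 2)
  rw [Nat.card_fin] at hge
  refine ⟨?_, ?_, ?_, ?_⟩
  · simpa using isKConnected_graphJoin_top (α := Fin (n + r + 1)) H
  · rw [toughness_graphJoin_top H (by omega) hle hge, Nat.card_fin]
    push_cast
    ring
  · exact_mod_cast ENNReal.natCast_div_lt_natCast_div (a := n + r + 2) (b := 2 * (r + 2))
      (c := n + r + 1) (d := 2 * r + 2) (by omega) (by omega) (by nlinarith)
  · exact not_pathFactorCriticalAvoidable_graphJoin _ (by omega)
      (by simp only [Nat.card_fin]; omega) (by simp only [Nat.card_fin]; omega)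
end
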